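/- arXiv:2105.09168 — 2 statements merged into one kernel-verified Lean document; each statement's English description precedes it below -/
import Mathlib

section
/- Let F be a linear and increasing functional on the class of lower semi-continuous convex functions φ : ℝⁿ → (-∞,∞] that are finite in a neighborhood of 0. Then there exists a constant c ≥ 0 such that F(φ) = c·φ(0) for all such φ. -/
open Filter Topology Metric

/-- `φ : ℝⁿ → (-∞,∞]` is a proper lower semi-continuous convex function. -/
def IsLscConvexFn {n : ℕ} (φ : EuclideanSpace ℝ (Fin n) → EReal) : Prop :=
  LowerSemicontinuous φ ∧ (∀ x, φ x ≠ ⊥) ∧ (∃ x, φ x ≠ ⊤) ∧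
    ∀ x y : EuclideanSpace ℝ (Fin n), ∀ a b : ℝ, 0 < a → 0 < b → a + b = 1 →
      φ (a • x + b • y) ≤ (a : EReal) * φ x + (b : EReal) * φ y

/-- Member of `Cvx~_n`: lsc convex and finite in a neighborhood of the origin. -/
def IsCvxTilde {n : ℕ} (φ : EuclideanSpace ℝ (Fin n) → EReal) : Prop :=
  IsLscConvexFn φ ∧ ∃ r : ℝ, 0 < r ∧ ∀ x ∈ ball (0 : EuclideanSpace ℝ (Fin n)) r, φ x ≠ ⊤

/-!
On constant functions positive linearity forces `F m = c * m` with `c = F 1`, and monotonicity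
gives `c ≥ 0`. The convex indicator `ι` of a closed ball around `0` (`0` on the ball, `⊤` off it)
satisfies `ι + ι = ι`, hence `F ι = 0` and `F (φ + ι) = F φ`: the functional only sees `φ` near
the origin. A convex function finite near `0` is continuous there, so on a small ball
`φ 0 - ε ≤ φ ≤ φ 0 + ε`; adding `ι` to all three and applying `F` gives
`|F φ - c * φ 0| ≤ c * ε`.
-/

section TopIndicator

variable {E : Type*} {s : Set E}

noncomputable def topIndicator (s : Set E) : E → EReal := sᶜ.indicator fun _ => ⊤

@[simp]
lemma topIndicator_of_mem {x : E} (hx : x ∈ s) : topIndicator s x = 0 :=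
  Set.indicator_of_notMem (not_not_intro hx) _

@[simp]
lemma topIndicator_of_notMem {x : E} (hx : x ∉ s) : topIndicator s x = ⊤ :=
  Set.indicator_of_mem hx _

lemma topIndicator_ne_bot (x : E) : topIndicator s x ≠ ⊥ := by
  by_cases hx : x ∈ s <;> simp [hx]

lemma topIndicator_add_self (x : E) : topIndicator s x + topIndicator s x = topIndicator s x := by
  by_cases hx : x ∈ s <;> simp [hx]

lemma lowerSemicontinuous_topIndicator [TopologicalSpace E] (hs : IsClosed s) :
    LowerSemicontinuous (topIndicator s) :=
  hs.isOpen_compl.lowerSemicontinuous_indicator le_top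

lemma add_topIndicator_le_add_topIndicator {φ ψ : E → EReal} (h : ∀ x ∈ s, φ x ≤ ψ x)
    (hψ : ∀ x, ψ x ≠ ⊥) (x : E) : φ x + topIndicator s x ≤ ψ x + topIndicator s x := by
  by_cases hx : x ∈ s
  · simpa [hx] using h x hx
  · simp [hx, EReal.add_top_of_ne_bot (hψ x)]

lemma add_topIndicator_convex_ineq [AddCommGroup E] [Module ℝ E] {φ : E → EReal}
    (hs : Convex ℝ s) (hbot : ∀ x, φ x ≠ ⊥)
    (hφ : ∀ x y : E, ∀ a b : ℝ, 0 < a → 0 < b → a + b = 1 →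
      φ (a • x + b • y) ≤ (a : EReal) * φ x + (b : EReal) * φ y)
    (x y : E) {a b : ℝ} (ha : 0 < a) (hb : 0 < b) (hab : a + b = 1) :
    φ (a • x + b • y) + topIndicator s (a • x + b • y) ≤
      (a : EReal) * (φ x + topIndicator s x) + (b : EReal) * (φ y + topIndicator s y) := by
  have hne : ∀ (c : ℝ) z, 0 < c → (c : EReal) * (φ z + topIndicator s z) ≠ ⊥ := fun c z hc =>
    (EReal.mul_ne_bot _ _).2 ⟨.inl (EReal.coe_ne_bot c),
      .inr (EReal.add_ne_bot_iff.2 ⟨hbot z, topIndicator_ne_bot z⟩),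
      .inl (EReal.coe_ne_top c), .inl (EReal.coe_nonneg.2 hc.le)⟩
  by_cases hx : x ∈ s
  · by_cases hy : y ∈ s
    · simpa [hx, hy, hs hx hy ha.le hb.le hab] using hφ x y a b ha hb hab
    · simp [hy, EReal.add_top_of_ne_bot (hbot y), EReal.coe_mul_top_of_pos hb,
        EReal.add_top_of_ne_bot (hne a x ha)]
  · simp [hx, EReal.add_top_of_ne_bot (hbot x), EReal.coe_mul_top_of_pos ha,
      EReal.top_add_of_ne_bot (hne b y hb)]

end TopIndicator

section CvxTilde

variable {n : ℕ} {φ : EuclideanSpace ℝ (Fin n) → EReal}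

lemma isCvxTilde_const (m : ℝ) : IsCvxTilde fun _ : EuclideanSpace ℝ (Fin n) => (m : EReal) := by
  refine ⟨⟨continuous_const.lowerSemicontinuous, fun _ => EReal.coe_ne_bot m,
    ⟨0, EReal.coe_ne_top m⟩, fun x y a b _ _ hab => ?_⟩, 1, one_pos, fun _ _ => EReal.coe_ne_top m⟩
  rw [← EReal.coe_mul, ← EReal.coe_mul, ← EReal.coe_add, ← add_mul, hab, one_mul]

lemma IsCvxTilde.add_topIndicator_closedBall (hφ : IsCvxTilde φ) {r : ℝ} (hr : 0 < r) :
    IsCvxTilde fun x => φ x + topIndicator (closedBall 0 r) x := by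
  obtain ⟨⟨hlsc, hbot, -, hconv⟩, ρ, hρ, hfin⟩ := hφ
  have hball : ball (0 : EuclideanSpace ℝ (Fin n)) (min r ρ) ⊆ closedBall 0 r ∩ ball 0 ρ :=
    fun x hx => ⟨ball_subset_closedBall (ball_subset_ball (min_le_left r ρ) hx),
      ball_subset_ball (min_le_right r ρ) hx⟩
  refine ⟨⟨?_, fun x => EReal.add_ne_bot_iff.2 ⟨hbot x, topIndicator_ne_bot x⟩, ⟨0, ?_⟩,
    fun x y a b ha hb hab => add_topIndicator_convex_ineq (convex_closedBall 0 r) hbot hconv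
      x y ha hb hab⟩, min r ρ, lt_min hr hρ, fun x hx => ?_⟩
  · exact hlsc.add' (lowerSemicontinuous_topIndicator isClosed_closedBall) fun x =>
      EReal.continuousAt_add (.inr (topIndicator_ne_bot x)) (.inl (hbot x))
  · simpa [hr.le] using hfin 0 (mem_ball_self hρ)
  · simpa [(hball hx).1] using hfin x (hball hx).2

lemma isCvxTilde_topIndicator_closedBall {r : ℝ} (hr : 0 < r) :
    IsCvxTilde (topIndicator (closedBall (0 : EuclideanSpace ℝ (Fin n)) r)) := by
  simpa using (isCvxTilde_const 0).add_topIndicator_closedBall hr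

lemma IsCvxTilde.continuousAt_zero (hφ : IsCvxTilde φ) : ContinuousAt φ 0 := by
  obtain ⟨⟨-, hbot, -, hconv⟩, r, hr, hfin⟩ := hφ
  have hcoe : Set.EqOn φ (fun x => ((φ x).toReal : EReal)) (ball 0 r) :=
    fun x hx => (EReal.coe_toReal (hfin x hx) (hbot x)).symm
  have hconvOn : ConvexOn ℝ (ball 0 r) fun x => (φ x).toReal := by
    refine convexOn_iff_forall_pos.2 ⟨convex_ball 0 r, fun x hx y hy a b ha hb hab => ?_⟩
    have h := hconv x y a b ha hb hab
    rwa [hcoe hx, hcoe hy, hcoe (convex_ball 0 r hx hy ha.le hb.le hab), ← EReal.coe_mul,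
      ← EReal.coe_mul, ← EReal.coe_add, EReal.coe_le_coe_iff] at h
  have hball : ball (0 : EuclideanSpace ℝ (Fin n)) r ∈ 𝓝 0 := ball_mem_nhds 0 hr
  exact (continuous_coe_real_ereal.continuousAt.comp
    ((hconvOn.continuousOn isOpen_ball).continuousAt hball)).congr
    (eventuallyEq_of_mem hball hcoe).symm

lemma IsCvxTilde.exists_closedBall_bounds (hφ : IsCvxTilde φ) {ε : ℝ} (hε : 0 < ε) :
    ∃ δ > 0, ∀ x ∈ closedBall 0 δ,
      (((φ 0).toReal - ε : ℝ) : EReal) ≤ φ x ∧ φ x ≤ (((φ 0).toReal + ε : ℝ) : EReal) := by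
  obtain ⟨r, hr, hfin⟩ := hφ.2
  have hIcc : Set.Icc (((φ 0).toReal - ε : ℝ) : EReal) ((φ 0).toReal + ε : ℝ) ∈
      𝓝 ((φ 0).toReal : EReal) :=
    Icc_mem_nhds (EReal.coe_lt_coe_iff.2 (by linarith)) (EReal.coe_lt_coe_iff.2 (by linarith))
  rw [EReal.coe_toReal (hfin 0 (mem_ball_self hr)) (hφ.1.2.1 0)] at hIcc
  obtain ⟨δ, hδ, hsub⟩ := Metric.mem_nhds_iff.1 (hφ.continuousAt_zero.preimage_mem_nhds hIcc)
  exact ⟨δ / 2, half_pos hδ, fun x hx => hsub (closedBall_subset_ball (half_lt_self hδ) hx)⟩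

end CvxTilde

lemma eq_apply_one_mul_of_posLinear {g : ℝ → ℝ}
    (hg : ∀ a b u v : ℝ, 0 < a → 0 < b → g (a * u + b * v) = a * g u + b * g v) (m : ℝ) :
    g m = g 1 * m := by
  have h0 : g 0 = 0 := by
    have h := hg 1 1 0 0 one_pos one_pos
    rw [mul_zero, add_zero] at h
    linarith
  rcases lt_trichotomy m 0 with hm | rfl | hm
  · have h := hg 1 (-m) m 1 one_pos (neg_pos.2 hm)
    rw [show 1 * m + -m * 1 = 0 by ring, h0] at h
    linarith
  · rw [h0, mul_zero]
  · have h := hg (m / 2) (m / 2) 1 1 (half_pos hm) (half_pos hm)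
    rw [show m / 2 * 1 + m / 2 * 1 = m by ring] at h
    linarith

section Functional

variable {n : ℕ} {F : (EuclideanSpace ℝ (Fin n) → EReal) → ℝ}

def IsPosLinearOnCvxTilde (F : (EuclideanSpace ℝ (Fin n) → EReal) → ℝ) : Prop :=
  ∀ φ ψ : EuclideanSpace ℝ (Fin n) → EReal, ∀ α β : ℝ,
    IsCvxTilde φ → IsCvxTilde ψ → 0 < α → 0 < β →
    IsCvxTilde (fun x => (α : EReal) * φ x + (β : EReal) * ψ x) →
    F (fun x => (α : EReal) * φ x + (β : EReal) * ψ x) = α * F φ + β * F ψ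

lemma IsPosLinearOnCvxTilde.apply_const (hF : IsPosLinearOnCvxTilde F) (m : ℝ) :
    F (fun _ => (m : EReal)) = F (fun _ => 1) * m := by
  have hg : ∀ a b u v : ℝ, 0 < a → 0 < b → F (fun _ => ((a * u + b * v : ℝ) : EReal)) =
      a * F (fun _ => (u : EReal)) + b * F (fun _ => (v : EReal)) := by
    intro a b u v ha hb
    have hcomb : (fun _ : EuclideanSpace ℝ (Fin n) => ((a * u + b * v : ℝ) : EReal)) =
        fun _ => (a : EReal) * u + (b : EReal) * v := by
      simp only [EReal.coe_add, EReal.coe_mul]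
    rw [hcomb]
    exact hF _ _ a b (isCvxTilde_const u) (isCvxTilde_const v) ha hb (hcomb ▸ isCvxTilde_const _)
  simpa using eq_apply_one_mul_of_posLinear (g := fun m => F fun _ => (m : EReal)) hg m

lemma IsPosLinearOnCvxTilde.apply_topIndicator_closedBall (hF : IsPosLinearOnCvxTilde F)
    {r : ℝ} (hr : 0 < r) : F (topIndicator (closedBall 0 r)) = 0 := by
  have hι := isCvxTilde_topIndicator_closedBall (n := n) hr
  have h := hF _ _ 1 1 hι hι one_pos one_pos (by simpa [topIndicator_add_self] using hι)
  simp only [EReal.coe_one, one_mul, topIndicator_add_self] at h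
  linarith

lemma IsPosLinearOnCvxTilde.apply_add_topIndicator_closedBall (hF : IsPosLinearOnCvxTilde F)
    {φ : EuclideanSpace ℝ (Fin n) → EReal} (hφ : IsCvxTilde φ) {r : ℝ} (hr : 0 < r) :
    F (fun x => φ x + topIndicator (closedBall 0 r) x) = F φ := by
  have h := hF φ _ 1 1 hφ (isCvxTilde_topIndicator_closedBall hr) one_pos one_pos
    (by simpa using hφ.add_topIndicator_closedBall hr)
  simp only [EReal.coe_one, one_mul] at h
  rw [h, hF.apply_topIndicator_closedBall hr]
  ring

lemma IsPosLinearOnCvxTilde.apply_le_of_le_on_closedBall (hF : IsPosLinearOnCvxTilde F)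
    (hmono : ∀ φ ψ : EuclideanSpace ℝ (Fin n) → EReal,
      IsCvxTilde φ → IsCvxTilde ψ → (∀ x, φ x ≤ ψ x) → F φ ≤ F ψ)
    {φ ψ : EuclideanSpace ℝ (Fin n) → EReal} (hφ : IsCvxTilde φ) (hψ : IsCvxTilde ψ)
    {r : ℝ} (hr : 0 < r) (h : ∀ x ∈ closedBall 0 r, φ x ≤ ψ x) : F φ ≤ F ψ := by
  rw [← hF.apply_add_topIndicator_closedBall hφ hr, ← hF.apply_add_topIndicator_closedBall hψ hr]
  exact hmono _ _ (hφ.add_topIndicator_closedBall hr) (hψ.add_topIndicator_closedBall hr)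
    (add_topIndicator_le_add_topIndicator h hψ.1.2.1)

end Functional

/-- Theorem 4*: a linear and increasing functional on `Cvx~_n` is `c·φ(0)`. -/
theorem riesz_cvx_tilde {n : ℕ} (F : (EuclideanSpace ℝ (Fin n) → EReal) → ℝ)
    (hlin : ∀ φ ψ : EuclideanSpace ℝ (Fin n) → EReal, ∀ α β : ℝ,
      IsCvxTilde φ → IsCvxTilde ψ → 0 < α → 0 < β →
      IsCvxTilde (fun x => (α : EReal) * φ x + (β : EReal) * ψ x) →
      F (fun x => (α : EReal) * φ x + (β : EReal) * ψ x) = α * F φ + β * F ψ)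
    (hmono : ∀ φ ψ : EuclideanSpace ℝ (Fin n) → EReal,
      IsCvxTilde φ → IsCvxTilde ψ → (∀ x, φ x ≤ ψ x) → F φ ≤ F ψ) :
    ∃ c : ℝ, 0 ≤ c ∧ ∀ φ : EuclideanSpace ℝ (Fin n) → EReal,
      IsCvxTilde φ → F φ = c * (φ 0).toReal := by
  have hF : IsPosLinearOnCvxTilde F := hlin
  refine ⟨F fun _ => 1, ?_, fun φ hφ => ?_⟩
  · have h := hmono _ _ (isCvxTilde_const 0) (isCvxTilde_const 1)
      fun _ => EReal.coe_le_coe_iff.2 zero_le_one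
    rw [hF.apply_const, hF.apply_const] at h
    simpa using h
  set c := F fun _ => 1
  have hbound : ∀ ε > 0, |F φ - c * (φ 0).toReal| ≤ c * ε := by
    intro ε hε
    obtain ⟨δ, hδ, hbounds⟩ := hφ.exists_closedBall_bounds hε
    have hlow := hF.apply_le_of_le_on_closedBall hmono (isCvxTilde_const _) hφ hδ
      fun x hx => (hbounds x hx).1
    have hup := hF.apply_le_of_le_on_closedBall hmono hφ (isCvxTilde_const _) hδ
      fun x hx => (hbounds x hx).2
    rw [hF.apply_const] at hlow hup
    rw [abs_sub_le_iff]
    constructor <;> linarith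
  have hlim : Tendsto (fun ε => c * ε) (𝓝[>] 0) (𝓝 0) := by
    simpa using ((continuous_const_mul c).tendsto 0).mono_left nhdsWithin_le_nhds
  have h := ge_of_tendsto hlim (eventually_nhdsWithin_of_forall fun ε hε => hbound ε hε)
  exact sub_eq_zero.1 (abs_nonpos_iff.1 h)
end

section
/- Let f : ℝⁿ → ℝ be a C² function with compact support. Then there exists a > 0 such that the function x ↦ f(x) + ρ_a(x) is convex on ℝⁿ, where ρ_a(x) = a|x|²/2 for |x| ≤ a and ρ_a(x) = a²|x| - a³/2 for |x| ≥ a. -/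
/-!
`ρ_a` is `C¹` with derivative `x ↦ rhoWeight a ‖x‖ • ⟪x, ·⟫`, and `rhoWeight a t * t = a * min t a`
is nondecreasing in `t`; by Cauchy–Schwarz this makes the derivative a monotone operator, which is
`a`-strongly monotone on the ball of radius `a` and grows like `a² ‖v‖` against points `v` outside
it.
Take `a` above the Lipschitz constant of `f'`, above twice the radius of the support of `f'`, and
with `a² ≥ 8 sup ‖f'‖`. Then `f' + ρ_a'` is monotone: inside the ball strong monotonicity beats the
Lipschitz bound, outside the support of `f'` only `ρ_a'` remains, and in the mixed case
`a² ‖v‖ / 4` beats `2 sup ‖f'‖ ‖v‖`. A differentiable function with monotone derivative is convex,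
since it is so on every line.
-/

open scoped RealInnerProductSpace

/-- The convex function `ρ_a` of linear growth from the paper. -/
noncomputable def rho {n : ℕ} (a : ℝ) (x : EuclideanSpace ℝ (Fin n)) : ℝ :=
  if ‖x‖ ≤ a then a * ‖x‖ ^ 2 / 2 else a ^ 2 * ‖x‖ - a ^ 3 / 2

theorem convexOn_univ_of_hasFDerivAt_of_monotone {E : Type*} [NormedAddCommGroup E]
    [NormedSpace ℝ E] {g : E → ℝ} {g' : E → E →L[ℝ] ℝ} (hg : ∀ x, HasFDerivAt g (g' x) x)
    (hmono : ∀ x y, 0 ≤ (g' x - g' y) (x - y)) : ConvexOn ℝ Set.univ g := by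
  refine ⟨convex_univ, fun p _ q _ s t hs ht hst => ?_⟩
  set c : ℝ → E := fun τ => AffineMap.lineMap p q τ
  have hgc (τ : ℝ) : HasDerivAt (g ∘ c) (g' (c τ) (q - p)) τ :=
    (hg (c τ)).comp_hasDerivAt τ AffineMap.hasDerivAt_lineMap
  have hmono' : Monotone (deriv (g ∘ c)) := by
    intro σ τ hστ
    rw [(hgc σ).deriv, (hgc τ).deriv, ← sub_nonneg, ← sub_apply]
    rcases hστ.eq_or_lt with rfl | hlt
    · simp
    have hc : c τ - c σ = (τ - σ) • (q - p) := by
      simp only [c, AffineMap.lineMap_apply_module', add_sub_add_right_eq_sub, sub_smul]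
    have h := hmono (c τ) (c σ)
    rwa [hc, map_smul, smul_eq_mul, mul_nonneg_iff_of_pos_left (sub_pos.2 hlt)] at h
  have hconv := hmono'.convexOn_univ_of_deriv fun τ => (hgc τ).differentiableAt
  have hline := hconv.2 (Set.mem_univ 0) (Set.mem_univ 1) hs ht hst
  have hct : c t = s • p + t • q := by
    rw [eq_sub_of_add_eq hst]; exact AffineMap.lineMap_apply_module p q t
  simpa [c, hct] using hline

theorem hasDerivAt_ite_le {p q : ℝ → ℝ} {c d x : ℝ} (hp : x ≤ c → HasDerivAt p d x)
    (hq : c ≤ x → HasDerivAt q d x) (hpq : p c = q c) :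
    HasDerivAt (fun s => if s ≤ c then p s else q s) d x := by
  rcases lt_trichotomy x c with hlt | rfl | hgt
  · refine (hp hlt.le).congr_of_eventuallyEq ?_
    filter_upwards [Iio_mem_nhds hlt] with s hs
    exact if_pos (le_of_lt hs)
  · have hIic : HasDerivWithinAt (fun s => if s ≤ x then p s else q s) d (Set.Iic x) x :=
      (hp le_rfl).hasDerivWithinAt.congr (fun s hs => if_pos hs) (if_pos le_rfl)
    have hIci : HasDerivWithinAt (fun s => if s ≤ x then p s else q s) d (Set.Ici x) x := by
      refine (hq le_rfl).hasDerivWithinAt.congr (fun s hs => ?_) (by simp [hpq])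
      split_ifs with h
      · rw [le_antisymm h hs, hpq]
      · rfl
    simpa using hIic.union hIci
  · refine (hq hgt.le).congr_of_eventuallyEq ?_
    filter_upwards [Ioi_mem_nhds hgt] with s hs
    exact if_neg (not_le.2 hs)

theorem HasCompactSupport.exists_eq_zero_of_lt_norm {X F : Type*} [SeminormedAddCommGroup X]
    [Zero F] {g : X → F} (hg : HasCompactSupport g) : ∃ r : ℝ, ∀ x, r < ‖x‖ → g x = 0 := by
  obtain ⟨r, hr⟩ := hg.isBounded.subset_closedBall 0
  refine ⟨r, fun x hx => image_eq_zero_of_notMem_tsupport fun hmem => ?_⟩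
  have : ‖x‖ ≤ r := by simpa using hr hmem
  exact this.not_gt hx

section Rho

variable {n : ℕ} {a : ℝ}

local notation "E" => EuclideanSpace ℝ (Fin n)

-- Going through `‖x‖²` rather than `‖x‖` avoids the non-differentiability of the norm at `0`.
noncomputable def rhoProfile (a s : ℝ) : ℝ :=
  if s ≤ a ^ 2 then a / 2 * s else a ^ 2 * √s - a ^ 3 / 2

theorem rho_eq_rhoProfile (ha : 0 ≤ a) : rho a = fun x : E => rhoProfile a (‖x‖ ^ 2) := by
  ext x
  simp only [rho, rhoProfile, sq_le_sq₀ (norm_nonneg x) ha, Real.sqrt_sq (norm_nonneg x)]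
  ring_nf

theorem hasDerivAt_rhoProfile (ha : 0 < a) (s : ℝ) :
    HasDerivAt (rhoProfile a) (if s ≤ a ^ 2 then a / 2 else a ^ 2 / (2 * √s)) s := by
  have hsqrt : √(a ^ 2) = a := Real.sqrt_sq ha.le
  refine hasDerivAt_ite_le (fun hs => ?_) (fun hs => ?_) (by rw [hsqrt]; ring)
  · rw [if_pos hs]
    simpa using (hasDerivAt_id s).const_mul (a / 2)
  · have hs0 : s ≠ 0 := (lt_of_lt_of_le (by positivity) hs).ne'
    have hd : (if s ≤ a ^ 2 then a / 2 else a ^ 2 / (2 * √s)) = a ^ 2 * (1 / (2 * √s)) := by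
      split_ifs with h
      · rw [le_antisymm h hs, hsqrt]; field_simp
      · ring
    rw [hd]
    exact ((Real.hasDerivAt_sqrt hs0).const_mul (a ^ 2)).sub_const (a ^ 3 / 2)

noncomputable def rhoWeight (a t : ℝ) : ℝ := if t ≤ a then a else a ^ 2 / t

theorem rhoWeight_nonneg (ha : 0 ≤ a) {t : ℝ} (ht : 0 ≤ t) : 0 ≤ rhoWeight a t := by
  unfold rhoWeight; split_ifs <;> positivity

theorem rhoWeight_mul_self (ha : 0 ≤ a) (t : ℝ) : rhoWeight a t * t = a * min t a := by
  unfold rhoWeight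
  split_ifs with h
  · rw [min_eq_left h, mul_comm]
  · have ht' : t ≠ 0 := (ha.trans_lt (not_le.1 h)).ne'
    rw [min_eq_right (not_le.1 h).le]; field_simp

noncomputable def rhoDeriv (a : ℝ) (x : E) : E →L[ℝ] ℝ := rhoWeight a ‖x‖ • innerSL ℝ x

theorem hasFDerivAt_rho (ha : 0 < a) (x : E) : HasFDerivAt (rho a) (rhoDeriv a x) x := by
  rw [rho_eq_rhoProfile ha.le]
  refine ((hasDerivAt_rhoProfile ha _).comp_hasFDerivAt x
    (hasFDerivAt_id x).norm_sq).congr_fderiv ?_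
  ext v
  simp only [rhoDeriv, rhoWeight, smul_apply, ContinuousLinearMap.comp_apply,
    ContinuousLinearMap.id_apply, innerSL_apply_apply, id, sq_le_sq₀ (norm_nonneg x) ha.le,
    Real.sqrt_sq (norm_nonneg x), smul_eq_mul, nsmul_eq_mul]
  split_ifs <;> ring

theorem rhoDeriv_sub_apply_sub (u v : E) :
    (rhoDeriv a u - rhoDeriv a v) (u - v) =
      rhoWeight a ‖u‖ * (‖u‖ ^ 2 - ⟪u, v⟫) + rhoWeight a ‖v‖ * (‖v‖ ^ 2 - ⟪u, v⟫) := by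
  simp only [rhoDeriv, sub_apply, smul_apply, innerSL_apply_apply, inner_sub_right,
    real_inner_self_eq_norm_sq, real_inner_comm v u, smul_eq_mul]
  ring

theorem rhoDeriv_sub_apply_sub_of_norm_le {u v : E} (hu : ‖u‖ ≤ a) (hv : ‖v‖ ≤ a) :
    (rhoDeriv a u - rhoDeriv a v) (u - v) = a * ‖u - v‖ ^ 2 := by
  simp only [rhoDeriv_sub_apply_sub, rhoWeight, if_pos hu, if_pos hv, norm_sub_sq_real]
  ring

theorem mul_min_sub_min_mul_sub_le_rhoDeriv_sub_apply_sub (ha : 0 ≤ a) (u v : E) :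
    a * (min ‖u‖ a - min ‖v‖ a) * (‖u‖ - ‖v‖) ≤ (rhoDeriv a u - rhoDeriv a v) (u - v) := by
  have hwu := rhoWeight_nonneg ha (norm_nonneg u)
  have hwv := rhoWeight_nonneg ha (norm_nonneg v)
  have hcs : ⟪u, v⟫ ≤ ‖u‖ * ‖v‖ := real_inner_le_norm u v
  calc a * (min ‖u‖ a - min ‖v‖ a) * (‖u‖ - ‖v‖)
      = (rhoWeight a ‖u‖ * ‖u‖ - rhoWeight a ‖v‖ * ‖v‖) * (‖u‖ - ‖v‖) := by
        rw [rhoWeight_mul_self ha, rhoWeight_mul_self ha]; ring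
    _ ≤ (rhoDeriv a u - rhoDeriv a v) (u - v) := by
        rw [rhoDeriv_sub_apply_sub]
        linarith [mul_le_mul_of_nonneg_left hcs (add_nonneg hwu hwv)]

theorem add_rhoDeriv_sub_apply_sub_nonneg {f' : E → E →L[ℝ] ℝ} {L r : ℝ} {K : NNReal}
    (hbound : ∀ x, ‖f' x‖ ≤ L) (hlip : LipschitzWith K f') (hvanish : ∀ x, r < ‖x‖ → f' x = 0)
    (hK : K ≤ a) (hr : 2 * r ≤ a) (hL : 8 * L ≤ a ^ 2) (u v : E) :
    0 ≤ (f' u + rhoDeriv a u - (f' v + rhoDeriv a v)) (u - v) := by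
  wlog huv : ‖u‖ ≤ ‖v‖ generalizing u v
  · convert this v u (le_of_not_ge huv) using 1
    simp only [map_sub, sub_apply, add_apply]
    ring
  have ha : 0 ≤ a := K.coe_nonneg.trans hK
  have hsplit : (f' u + rhoDeriv a u - (f' v + rhoDeriv a v)) (u - v) =
      (f' u - f' v) (u - v) + (rhoDeriv a u - rhoDeriv a v) (u - v) := by
    simp only [sub_apply, add_apply]
    ring
  have hf : -(‖f' u - f' v‖ * ‖u - v‖) ≤ (f' u - f' v) (u - v) :=
    neg_le_of_abs_le ((f' u - f' v).le_opNorm (u - v))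
  have hρ := mul_min_sub_min_mul_sub_le_rhoDeriv_sub_apply_sub ha u v
  rw [hsplit]
  rcases le_or_gt ‖v‖ a with hva | hva
  · rw [rhoDeriv_sub_apply_sub_of_norm_le (huv.trans hva) hva]
    have hfK : ‖f' u - f' v‖ * ‖u - v‖ ≤ K * ‖u - v‖ * ‖u - v‖ :=
      mul_le_mul_of_nonneg_right (hlip.norm_sub_le u v) (norm_nonneg _)
    linarith [mul_le_mul_of_nonneg_right hK (mul_self_nonneg ‖u - v‖)]
  rcases le_or_gt ‖u‖ r with hur | hur
  · rw [hvanish v (by linarith), sub_zero] at hf ⊢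
    rw [min_eq_left (by linarith), min_eq_right hva.le] at hρ
    have hfu : ‖f' u‖ * ‖u - v‖ ≤ L * (2 * ‖v‖) :=
      mul_le_mul (hbound u) (by linarith [norm_sub_le u v]) (norm_nonneg _)
        ((norm_nonneg _).trans (hbound u))
    have hgap : a / 2 * (‖v‖ / 2) ≤ (a - ‖u‖) * (‖v‖ - ‖u‖) :=
      mul_le_mul (by linarith) (by linarith) (by positivity) (by linarith)
    have hρ' : a * (a / 2 * (‖v‖ / 2)) ≤ a * (‖u‖ - a) * (‖u‖ - ‖v‖) :=
      (mul_le_mul_of_nonneg_left hgap ha).trans_eq (by ring)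
    linarith [mul_le_mul_of_nonneg_right hL (norm_nonneg v)]
  · rw [hvanish u hur, hvanish v (hur.trans_le huv), sub_self, zero_apply, zero_add]
    refine le_trans ?_ hρ
    exact mul_nonneg_of_nonpos_of_nonpos
      (mul_nonpos_of_nonneg_of_nonpos ha (sub_nonpos.2 (min_le_min_right a huv)))
      (sub_nonpos.2 huv)

end Rho

/-- Every `C²` compactly supported function becomes convex after adding `ρ_a`
for sufficiently large `a`. -/
theorem add_rho_convex {n : ℕ} (f : EuclideanSpace ℝ (Fin n) → ℝ)
    (hf : ContDiff ℝ 2 f) (hsupp : HasCompactSupport f) :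
    ∃ a : ℝ, 0 < a ∧ ConvexOn ℝ Set.univ (fun x => f x + rho a x) := by
  obtain ⟨L, hL⟩ := (hsupp.fderiv ℝ).exists_bound_of_continuous
    (hf.continuous_fderiv (by norm_num))
  obtain ⟨K, hK⟩ := (hf.fderiv_right (m := 1) (by norm_num)).lipschitzWith_of_hasCompactSupport
    (hsupp.fderiv ℝ) one_ne_zero
  obtain ⟨r, hr⟩ := (hsupp.fderiv ℝ).exists_eq_zero_of_lt_norm
  have hL0 : 0 ≤ L := (norm_nonneg _).trans (hL 0)
  set a := 1 + K + 2 * |r| + 8 * L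
  have ha1 : 1 ≤ a := by linarith [K.coe_nonneg, abs_nonneg r]
  have haL : 8 * L ≤ a ^ 2 :=
    le_trans (by linarith [K.coe_nonneg, abs_nonneg r]) (le_self_pow₀ ha1 two_ne_zero)
  refine ⟨a, by linarith, convexOn_univ_of_hasFDerivAt_of_monotone
    (g' := fun x => fderiv ℝ f x + rhoDeriv a x) (fun x => ?_) ?_⟩
  · exact (hf.differentiable (by norm_num) x).hasFDerivAt.add (hasFDerivAt_rho (by linarith) x)
  · exact add_rhoDeriv_sub_apply_sub_nonneg hL hK hr (by linarith [abs_nonneg r])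
      (by linarith [le_abs_self r, K.coe_nonneg]) haL
end
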